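/- Every linear invariant operator T on the space of F_q-linear polynomials has the representation T = Σ_{l≥0} σ_l δ_0^{(l)} with σ_l = (TP_l)(1)/D_l, where {P_l} is the basic sequence of a fixed delta operator δ = τ^{-1}δ_0; the series is finite when applied to any polynomial. -/

import Mathlib

/-! Both sides are diagonal in the basis `t^{q^m}`: invariance under `ρ_x`, for the uniformizer
`x`, whose eigenvalues `x^{q^m}` are pairwise distinct, forces `T t^{q^m} = d_m t^{q^m}`, and
`τ^l δ^l` multiplies `t^{q^m}` by `deltaCoeff q c l m`. So one must show
`d_m = Σ_l σ_l deltaCoeff q c l m`. Pair a sequence `a` with `u` by `Σ_m a_m u_m`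
(`linearCombination L a u`), so that `d` pairs with `P_n` to `(T P_n)(1)`. From
`δ₀ P_n = [n] τ P_{n-1}` and the additivity of `a ↦ a^q`, `deltaCoeff q c l` pairs with `P_n` to
`D_l` if `n = l` and to `0` otherwise. Hence both sides of the claim have the same pairing with
every `P_n`, and since the `P_n` are triangular with nonzero diagonal, these pairings determine a
sequence. -/

noncomputable section

/-- `[i] = x^{q^i} - x`. -/
def brk {K : Type*} [CommRing K] (q : ℕ) (x : K) (i : ℕ) : K := x ^ q ^ i - x

/-- Carlitz factorial: `D_0 = 1`, `D_i = [i] D_{i-1}^q`. -/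
def Dfac {K : Type*} [CommRing K] (q : ℕ) (x : K) : ℕ → K
  | 0 => 1
  | i + 1 => brk q x (i + 1) * (Dfac q x i) ^ q

/-- The Frobenius `τ` on `F_q`-linear polynomials `Σ a_k t^{q^k}` (encoded as `ℕ →₀ L`). -/
def frob {L : Type*} [CommRing L] (q : ℕ) (u : ℕ →₀ L) : ℕ →₀ L :=
  u.sum fun k a => Finsupp.single (k + 1) (a ^ q)

/-- Evaluation at `t = 1`. -/
def eval1 {L : Type*} [CommRing L] (u : ℕ →₀ L) : L :=
  u.sum fun _ a => a

/-- The multiplicative shift `(ρ_λ u)(t) = u(λ t)`. -/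
def rho {K L : Type*} [Field K] [Field L] [Algebra K L] (q : ℕ) (lam : K) (u : ℕ →₀ L) :
    ℕ →₀ L :=
  u.sum fun k a => Finsupp.single k ((algebraMap K L lam) ^ q ^ k * a)

open Finsupp Function

section Coefficients

variable {L : Type*} [CommRing L]

@[simp]
lemma frob_apply_zero (q : ℕ) (u : ℕ →₀ L) : frob q u 0 = 0 := by
  simp [frob, Finsupp.sum_apply]

lemma frob_apply_succ {q : ℕ} (hq : q ≠ 0) (u : ℕ →₀ L) (m : ℕ) :
    frob q u (m + 1) = u m ^ q := by
  rw [frob, Finsupp.sum_apply, Finsupp.sum_eq_single m]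
  · simp
  · intro k _ hkm
    simp [hkm]
  · simp [zero_pow hq]

lemma eval1_eq_linearCombination (u : ℕ →₀ L) : eval1 u = linearCombination L 1 u := by
  simp [eval1, linearCombination_apply]

lemma linearCombination_eq_of_apply_eq_mul {a b : ℕ → L} {u v : ℕ →₀ L}
    (h : ∀ m, v m = a m * u m) : linearCombination L b v = linearCombination L (a * b) u := by
  have hsupp : v.support ⊆ u.support := fun m hm => by
    rw [Finsupp.mem_support_iff, h] at hm
    exact Finsupp.mem_support_iff.2 (right_ne_zero_of_mul hm)
  rw [linearCombination_apply, linearCombination_apply,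
    Finsupp.sum_of_support_subset v hsupp _ (by simp)]
  exact Finset.sum_congr rfl fun m _ => by simp [h]; ring

lemma LinearMap.apply_eq_mul_of_apply_single (S : (ℕ →₀ L) →ₗ[L] (ℕ →₀ L)) {e : ℕ → L}
    (hS : ∀ n, S (Finsupp.single n 1) = Finsupp.single n (e n)) (u : ℕ →₀ L) (m : ℕ) :
    S u m = e m * u m := by
  induction u using Finsupp.induction_linear with
  | zero => simp
  | add u v hu hv => simp [hu, hv, mul_add]
  | single n a =>
    rw [← smul_single_one, map_smul, hS]
    by_cases h : n = m
    · subst h; simp [mul_comm]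
    · simp [h]

end Coefficients

lemma rho_apply {K L : Type*} [Field K] [Field L] [Algebra K L] (q : ℕ) (lam : K)
    (u : ℕ →₀ L) (m : ℕ) : rho q lam u m = algebraMap K L lam ^ q ^ m * u m := by
  rw [rho, Finsupp.sum_apply, Finsupp.sum_eq_single m]
  · simp
  · intro k _ hkm
    simp [hkm]
  · simp

lemma LinearMap.apply_single_eq_of_commute {L : Type*} [Field L]
    (T : (ℕ →₀ L) →ₗ[L] (ℕ →₀ L)) {μ : ℕ → L} (hμ : Injective μ)
    {ρ : (ℕ →₀ L) → (ℕ →₀ L)} (hρ : ∀ u m, ρ u m = μ m * u m) (hT : ∀ u, T (ρ u) = ρ (T u))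
    (n : ℕ) : T (Finsupp.single n 1) = Finsupp.single n (T (Finsupp.single n 1) n) := by
  have hρn : ρ (Finsupp.single n 1) = μ n • Finsupp.single n 1 := by
    ext m
    by_cases h : n = m
    · subst h; simp [hρ]
    · simp [hρ, h]
  have hTn := hT (Finsupp.single n 1)
  rw [hρn, map_smul] at hTn
  ext m
  by_cases h : n = m
  · subst h; simp
  · have hm := congrArg (· m) hTn
    simp only [Finsupp.smul_apply, smul_eq_mul, hρ] at hm
    rw [Finsupp.single_apply, if_neg h]
    exact (mul_eq_mul_right_iff.1 hm).resolve_left (hμ.ne h)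

section DeltaPowers

variable {L : Type*} [CommRing L] {q : ℕ} {c : ℕ → L}

/-- The eigenvalue of `τ^l δ^l` on `t^{q^m}`, namely `∏_{j<l} c_{m-j}^{q^j}`. -/
def deltaCoeff (q : ℕ) (c : ℕ → L) : ℕ → ℕ → L
  | 0, _ => 1
  | l + 1, m => c m * deltaCoeff q c l (m - 1) ^ q

lemma iterate_frob_iterate_apply (hq : q ≠ 0) (hc0 : c 0 = 0) {δ : (ℕ →₀ L) → (ℕ →₀ L)}
    (hδ : ∀ u m, frob q (δ u) m = c m * u m) (l : ℕ) (f : ℕ →₀ L) (m : ℕ) :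
    (frob q)^[l] (δ^[l] f) m = deltaCoeff q c l m * f m := by
  induction l generalizing f m with
  | zero => simp [deltaCoeff]
  | succ l ih =>
    rw [iterate_succ_apply δ, iterate_succ_apply' (frob q)]
    rcases m with _ | m
    · simp [deltaCoeff, hc0]
    · rw [frob_apply_succ hq, ih, mul_pow, ← frob_apply_succ hq, hδ]
      simp only [deltaCoeff, Nat.add_sub_cancel]
      ring

lemma linearCombination_frob {p e : ℕ} [ExpChar L p] (hq : q = p ^ e) (b : ℕ → L)
    (u : ℕ →₀ L) :
    linearCombination L (fun m => b (m - 1) ^ q) (frob q u) = linearCombination L b u ^ q := by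
  subst hq
  rw [frob, map_finsuppSum, linearCombination_apply, Finsupp.sum, Finsupp.sum,
    sum_pow_char_pow]
  simp [mul_pow]

end DeltaPowers

lemma linearCombination_deltaCoeff_eq_ite {K L : Type*} [CommRing K] [CommRing L] [Algebra K L]
    {p e q : ℕ} [ExpChar L p] (hq : q = p ^ e) (x : K) {c : ℕ → L}
    {δ₀ : (ℕ →₀ L) → (ℕ →₀ L)} (hδ₀ : ∀ u m, δ₀ u m = c m * u m) {P : ℕ → (ℕ →₀ L)}
    (hP01 : eval1 (P 0) = 1) (hP1 : ∀ n, 1 ≤ n → eval1 (P n) = 0) (hP0 : δ₀ (P 0) = 0)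
    (hPn : ∀ n, 1 ≤ n → δ₀ (P n) = algebraMap K L (brk q x n) • frob q (P (n - 1)))
    (l n : ℕ) :
    linearCombination L (deltaCoeff q c l) (P n)
      = if n = l then algebraMap K L (Dfac q x l) else 0 := by
  induction l generalizing n with
  | zero =>
    rw [show deltaCoeff q c 0 = 1 from rfl, ← eval1_eq_linearCombination]
    rcases n with _ | n
    · simp [Dfac, hP01]
    · simp [hP1]
  | succ l ih =>
    have hstep : linearCombination L (deltaCoeff q c (l + 1)) (P n)
        = linearCombination L (fun m => deltaCoeff q c l (m - 1) ^ q) (δ₀ (P n)) :=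
      (linearCombination_eq_of_apply_eq_mul (hδ₀ (P n))).symm
    rcases n with _ | n
    · simp [hstep, hP0]
    · rw [hstep, hPn (n + 1) le_add_self, map_smul, Nat.add_sub_cancel,
        linearCombination_frob hq, ih, smul_eq_mul]
      by_cases h : n = l
      · subst h; simp [Dfac]
      · simp [h, zero_pow (show q ≠ 0 by subst hq; exact (expChar_pow_pos L p e).ne')]

lemma eq_of_linearCombination_eq_of_triangular {L : Type*} [CommRing L] [IsDomain L]
    {P : ℕ → (ℕ →₀ L)} (hP : ∀ n, P n n ≠ 0 ∧ ∀ k, n < k → P n k = 0) {a b : ℕ → L} {K : ℕ}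
    (h : ∀ n ≤ K, linearCombination L a (P n) = linearCombination L b (P n)) {m : ℕ}
    (hm : m ≤ K) : a m = b m := by
  induction m using Nat.strong_induction_on with
  | _ m ih =>
    have hsplit : ∀ w : ℕ → L,
        linearCombination L w (P m) = ∑ k ∈ Finset.range m, P m k * w k + P m m * w m := by
      intro w
      have hsupp : (P m).support ⊆ Finset.range (m + 1) := fun k hk => by
        by_contra hkm
        exact Finsupp.mem_support_iff.1 hk ((hP m).2 k (by simpa using hkm))
      rw [linearCombination_apply, Finsupp.sum_of_support_subset _ hsupp _ (by simp),
        Finset.sum_range_succ]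
      rfl
    have hmK := h m hm
    rw [hsplit, hsplit, Finset.sum_congr rfl fun k hk =>
      by rw [ih k (Finset.mem_range.1 hk) (by simp at hk; omega)]] at hmK
    exact mul_left_cancel₀ (hP m).1 (add_left_cancel hmK)

lemma eq_sum_div_mul_of_orthogonal {L : Type*} [Field L]
    {P : ℕ → (ℕ →₀ L)} (hP : ∀ n, P n n ≠ 0 ∧ ∀ k, n < k → P n k = 0) {E : ℕ → ℕ → L}
    {D : ℕ → L} (hD : ∀ l, D l ≠ 0)
    (horth : ∀ l n, linearCombination L (E l) (P n) = if n = l then D l else 0)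
    (a : ℕ → L) {K m : ℕ} (hm : m ≤ K) :
    a m = ∑ l ∈ Finset.range (K + 1), linearCombination L a (P l) / D l * E l m := by
  refine eq_of_linearCombination_eq_of_triangular (a := a)
    (b := fun k => ∑ l ∈ Finset.range (K + 1), linearCombination L a (P l) / D l * E l k)
    hP (fun n hn => ?_) hm
  have hlin : linearCombination L
        (fun k => ∑ l ∈ Finset.range (K + 1), linearCombination L a (P l) / D l * E l k) (P n)
      = ∑ l ∈ Finset.range (K + 1),
          linearCombination L a (P l) / D l * linearCombination L (E l) (P n) := by
    simp only [linearCombination_apply, Finsupp.sum, smul_eq_mul, Finset.mul_sum]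
    rw [Finset.sum_comm]
    exact Finset.sum_congr rfl fun _ _ => Finset.sum_congr rfl fun _ _ => by ring
  simp [hlin, horth, hD, Nat.lt_succ_of_le hn]

lemma HahnSeries.single_one_pow_injective {R : Type*} [Semiring R] [Nontrivial R] :
    Injective fun k : ℕ => (HahnSeries.single (1 : ℤ) (1 : R)) ^ k := by
  intro i j hij
  have := congrArg HahnSeries.order hij
  simp only [HahnSeries.single_pow, one_pow] at this
  rw [HahnSeries.order_single one_ne_zero, HahnSeries.order_single one_ne_zero] at this
  simpa using this

lemma Dfac_ne_zero {K : Type*} [CommRing K] [IsDomain K] {x : K}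
    (hx : Injective (x ^ · : ℕ → K)) {q : ℕ} (hq : 1 < q) (l : ℕ) : Dfac q x l ≠ 0 := by
  induction l with
  | zero => exact one_ne_zero
  | succ l ih =>
    refine mul_ne_zero (sub_ne_zero.2 fun h => ?_) (pow_ne_zero _ ih)
    have := hx (h.trans (pow_one x).symm)
    exact (Nat.one_lt_pow (Nat.succ_ne_zero l) hq).ne' this

theorem invariant_operator_expansion_general {F L : Type*} [Field F] [Fintype F] [Field L]
    [Algebra (LaurentSeries F) L]
    (p : ℕ) [CharP F p] [ExpChar L p]
    (q : ℕ) (hq : q = Fintype.card F)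
    (c : ℕ → L) (hc0 : c 0 = 0)
    (δ₀ : (ℕ →₀ L) →ₗ[L] (ℕ →₀ L))
    (hδ₀ : ∀ n : ℕ, δ₀ (Finsupp.single n 1) = c n • Finsupp.single n 1)
    (δ : (ℕ →₀ L) → (ℕ →₀ L)) (hδ : ∀ u, frob q (δ u) = δ₀ u)
    (P : ℕ → (ℕ →₀ L))
    (hPdeg : ∀ n : ℕ, P n n ≠ 0 ∧ ∀ k, n < k → P n k = 0)
    (hP01 : eval1 (P 0) = 1) (hP1 : ∀ n, 1 ≤ n → eval1 (P n) = 0)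
    (hP0 : δ₀ (P 0) = 0)
    (hPn : ∀ n, 1 ≤ n →
      δ₀ (P n)
        = algebraMap (LaurentSeries F) L
            (brk q (HahnSeries.single (1 : ℤ) (1 : F)) n) • frob q (P (n - 1)))
    (T : (ℕ →₀ L) →ₗ[L] (ℕ →₀ L))
    (hT : ∀ (lam : LaurentSeries F) (u : ℕ →₀ L), T (rho q lam u) = rho q lam (T u)) :
    ∀ (f : ℕ →₀ L) (N : ℕ), (∀ k, N < k → f k = 0) →
      T f = ∑ l ∈ Finset.range (N + 1),
          (eval1 (T (P l))
              / algebraMap (LaurentSeries F) L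
                  (Dfac q (HahnSeries.single (1 : ℤ) (1 : F)) l))
            • (frob q)^[l] (δ^[l] f) := by
  intro f N hf
  set x : LaurentSeries F := HahnSeries.single (1 : ℤ) (1 : F)
  have hq1 : 1 < q := hq ▸ Fintype.one_lt_card
  obtain ⟨e, -, hqe⟩ := FiniteField.card F p
  have hδ₀c : ∀ u m, δ₀ u m = c m * u m :=
    δ₀.apply_eq_mul_of_apply_single fun n => by rw [hδ₀, smul_single_one]
  have hμ : Injective fun n => algebraMap (LaurentSeries F) L x ^ q ^ n := by
    simpa only [comp_def, map_pow] using (algebraMap (LaurentSeries F) L).injective.comp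
      (HahnSeries.single_one_pow_injective.comp (Nat.pow_right_injective hq1))
  have hTc : ∀ u m, T u m = T (Finsupp.single m 1) m * u m :=
    T.apply_eq_mul_of_apply_single (T.apply_single_eq_of_commute hμ (rho_apply q x) (hT x))
  have hTP : ∀ l,
      eval1 (T (P l)) = linearCombination L (fun m => T (Finsupp.single m 1) m) (P l) := fun l => by
    rw [eval1_eq_linearCombination, linearCombination_eq_of_apply_eq_mul (hTc _), mul_one]
  have horth := linearCombination_deltaCoeff_eq_ite (hq.trans hqe) x hδ₀c hP01 hP1 hP0 hPn
  have hD : ∀ l, algebraMap (LaurentSeries F) L (Dfac q x l) ≠ 0 := fun l =>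
    (map_ne_zero _).2 (Dfac_ne_zero HahnSeries.single_one_pow_injective hq1 l)
  ext m
  simp only [hTc f, Finsupp.finsetSum_apply, Finsupp.smul_apply, smul_eq_mul,
    iterate_frob_iterate_apply (zero_lt_one.trans hq1).ne' hc0 (fun u m => by rw [hδ, hδ₀c])]
  rcases le_or_gt m N with hm | hm
  · rw [eq_sum_div_mul_of_orthogonal hPdeg hD horth (fun k => T (Finsupp.single k 1) k) hm,
      Finset.sum_mul]
    exact Finset.sum_congr rfl fun l _ => by rw [hTP]; ring
  · simp [hf m hm]

/-- Every linear invariant operator `T` on the space of `F_q`-linear polynomials has the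
representation `T = Σ_{l≥0} σ_l δ₀^{(l)}` with `σ_l = (T P_l)(1) / D_l`, where `{P_l}` is the
basic sequence of a fixed delta operator `δ = τ^{-1}δ₀` and `δ₀^{(l)} = τ^l δ^l`; the series is
finite when applied to any polynomial (of degree `≤ q^N`). -/
theorem invariant_operator_expansion {F L : Type*} [Field F] [Fintype F] [Field L]
    [Algebra (LaurentSeries F) L]
    (p : ℕ) [Fact p.Prime] [CharP F p] [ExpChar L p] [PerfectRing L p]
    (q : ℕ) (hq : q = Fintype.card F)
    (c : ℕ → L) (hc0 : c 0 = 0) (hc : ∀ n, 1 ≤ n → c n ≠ 0)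
    (δ₀ : (ℕ →₀ L) →ₗ[L] (ℕ →₀ L))
    (hδ₀ : ∀ n : ℕ, δ₀ (Finsupp.single n 1) = c n • Finsupp.single n 1)
    (δ : (ℕ →₀ L) → (ℕ →₀ L)) (hδ : ∀ u, frob q (δ u) = δ₀ u)
    (P : ℕ → (ℕ →₀ L))
    (hPdeg : ∀ n : ℕ, P n n ≠ 0 ∧ ∀ k, n < k → P n k = 0)
    (hP01 : eval1 (P 0) = 1) (hP1 : ∀ n, 1 ≤ n → eval1 (P n) = 0)
    (hP0 : δ₀ (P 0) = 0)
    (hPn : ∀ n, 1 ≤ n →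
      δ₀ (P n)
        = algebraMap (LaurentSeries F) L
            (brk q (HahnSeries.single (1 : ℤ) (1 : F)) n) • frob q (P (n - 1)))
    (T : (ℕ →₀ L) →ₗ[L] (ℕ →₀ L))
    (hT : ∀ (lam : LaurentSeries F) (u : ℕ →₀ L), T (rho q lam u) = rho q lam (T u)) :
    ∀ (f : ℕ →₀ L) (N : ℕ), (∀ k, N < k → f k = 0) →
      T f = ∑ l ∈ Finset.range (N + 1),
          (eval1 (T (P l))
              / algebraMap (LaurentSeries F) L
                  (Dfac q (HahnSeries.single (1 : ℤ) (1 : F)) l))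
            • (frob q)^[l] (δ^[l] f) :=
  invariant_operator_expansion_general p q hq c hc0 δ₀ hδ₀ δ hδ P hPdeg hP01 hP1 hP0 hPn T hT
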